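/- arXiv:1707.06953 — 3 statements merged into one kernel-verified Lean document; each statement's English description precedes it below -/
import Mathlib

section
/- For real numbers $\gamma_1,\gamma_2,\gamma_3$ with $\kappa_1 = (\gamma_1+\gamma_2+\gamma_3)/3$, $\kappa_2 = \frac{1}{3}\sum_i(\gamma_i-\kappa_1)^2$, $\kappa_3 = \frac{1}{3}\sum_i(\gamma_i-\kappa_1)^3$, one has $|\kappa_3| \le \kappa_2^{3/2}/\sqrt{2}$. Consequently the skewness statistic $\tau_3 = \sqrt{2}\,\kappa_3\,\kappa_2^{-3/2}$ lies in $[-1,1]$ whenever $\kappa_2 > 0$. -/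
theorem skewness_bound (γ1 γ2 γ3 κ1 κ2 κ3 : ℝ)
    (h1 : κ1 = (γ1 + γ2 + γ3) / 3)
    (h2 : κ2 = ((γ1 - κ1) ^ 2 + (γ2 - κ1) ^ 2 + (γ3 - κ1) ^ 2) / 3)
    (h3 : κ3 = ((γ1 - κ1) ^ 3 + (γ2 - κ1) ^ 3 + (γ3 - κ1) ^ 3) / 3) :
    |κ3| ≤ κ2 ^ ((3 : ℝ) / 2) / Real.sqrt 2 ∧
    (0 < κ2 → Real.sqrt 2 * κ3 / κ2 ^ ((3 : ℝ) / 2) ∈ Set.Icc (-1 : ℝ) 1) := by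
  set a := γ1 - κ1 with ha
  set b := γ2 - κ1 with hb
  have hc : γ3 - κ1 = -(a + b) := by rw [ha, hb, h1]; ring
  have hκ2 : κ2 = (a ^ 2 + b ^ 2 + (a + b) ^ 2) / 3 := by rw [h2, hc]; ring
  have hκ3 : κ3 = -(a * b * (a + b)) := by rw [h3, hc]; ring
  have hκ2nn : 0 ≤ κ2 := by rw [hκ2]; positivity
  have key : 2 * κ3 ^ 2 ≤ κ2 ^ 3 := by
    have hid : κ2 ^ 3 - 2 * κ3 ^ 2 =
        2 / 27 * ((a - b) * (2 * a + b) * (a + 2 * b)) ^ 2 := by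
      rw [hκ2, hκ3]; ring
    nlinarith [sq_nonneg ((a - b) * (2 * a + b) * (a + 2 * b))]
  have hrpow : κ2 ^ ((3 : ℝ) / 2) = Real.sqrt (κ2 ^ 3) := by
    rw [Real.sqrt_eq_rpow, ← Real.rpow_natCast κ2 3, ← Real.rpow_mul hκ2nn]
    norm_num
  have hsqrt2 : (0 : ℝ) < Real.sqrt 2 := by positivity
  have habs : |κ3| * Real.sqrt 2 ≤ Real.sqrt (κ2 ^ 3) := by
    rw [show |κ3| * Real.sqrt 2 = Real.sqrt (κ3 ^ 2 * 2) by
      rw [Real.sqrt_mul (sq_nonneg _), Real.sqrt_sq_eq_abs]]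
    exact Real.sqrt_le_sqrt (by linarith)
  have main : |κ3| ≤ κ2 ^ ((3 : ℝ) / 2) / Real.sqrt 2 := by
    rw [hrpow, le_div_iff₀ hsqrt2]; exact habs
  refine ⟨main, fun hpos => ?_⟩
  have hp : 0 < κ2 ^ ((3 : ℝ) / 2) := Real.rpow_pos_of_pos hpos _
  have habs2 : |Real.sqrt 2 * κ3 / κ2 ^ ((3 : ℝ) / 2)| ≤ 1 := by
    rw [abs_div, abs_mul, abs_of_pos hsqrt2, abs_of_pos hp, div_le_one hp]
    calc Real.sqrt 2 * |κ3| ≤ Real.sqrt 2 * (κ2 ^ ((3 : ℝ) / 2) / Real.sqrt 2) :=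
          by exact mul_le_mul_of_nonneg_left main hsqrt2.le
      _ = κ2 ^ ((3 : ℝ) / 2) := by field_simp
  exact abs_le.mp habs2
end

section
/- For $\mu > 0$, the function $q(z) = \mu^{3/2}\sqrt{6/\pi}\,\big(\frac{9z^2}{2} + \frac{e^{-9\mu z^2/2} - 1}{\mu}\big) e^{-3\mu z^2/2}\,\mathbf{1}(z > 0)$ is a probability density: it is nonnegative on $(0,\infty)$ and integrates to 1 over $\mathbb{R}$. -/
open Real Set MeasureTheory

theorem largest_centered_eigenvalue_density (μ : ℝ) (hμ : 0 < μ) :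
    (∀ z : ℝ, 0 < z →
      0 ≤ μ ^ ((3 : ℝ) / 2) * Real.sqrt (6 / Real.pi) *
        (9 * z ^ 2 / 2 + (Real.exp (-9 * μ * z ^ 2 / 2) - 1) / μ)
          * Real.exp (-3 * μ * z ^ 2 / 2)) ∧
    ∫ z : ℝ, Set.indicator (Set.Ioi (0 : ℝ))
        (fun z => μ ^ ((3 : ℝ) / 2) * Real.sqrt (6 / Real.pi) *
          (9 * z ^ 2 / 2 + (Real.exp (-9 * μ * z ^ 2 / 2) - 1) / μ)
            * Real.exp (-3 * μ * z ^ 2 / 2)) z = 1 := by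
  constructor
  · intro z hz
    have key : 9 * z ^ 2 / 2 + (Real.exp (-9 * μ * z ^ 2 / 2) - 1) / μ
        = (9 * z ^ 2 / 2 * μ + (Real.exp (-9 * μ * z ^ 2 / 2) - 1)) / μ := by
      field_simp
    have h0 : 0 ≤ 9 * z ^ 2 / 2 + (Real.exp (-9 * μ * z ^ 2 / 2) - 1) / μ := by
      rw [key]
      apply div_nonneg _ hμ.le
      nlinarith [Real.add_one_le_exp (-9 * μ * z ^ 2 / 2)]
    have hc : 0 ≤ μ ^ ((3 : ℝ) / 2) * Real.sqrt (6 / Real.pi) := by positivity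
    exact mul_nonneg (mul_nonneg hc h0) (Real.exp_pos _).le
  · set c : ℝ := μ ^ ((3 : ℝ) / 2) * Real.sqrt (6 / Real.pi) with hc
    have h32 : (0:ℝ) < 3 * μ / 2 := by linarith
    have h6 : (0:ℝ) < 6 * μ := by linarith
    have hnp : ∀ x : ℝ, x ^ (2:ℝ) = x ^ 2 := fun x => by
      rw [show (2:ℝ) = ((2:ℕ):ℝ) by norm_num, Real.rpow_natCast]
    have hi1 : Integrable (fun x : ℝ => x ^ 2 * Real.exp (-(3 * μ / 2) * x ^ 2)) := by
      have := integrable_rpow_mul_exp_neg_mul_sq h32 (s := 2) (by norm_num)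
      simpa [hnp] using this
    have hi2 : Integrable (fun x : ℝ => Real.exp (-(6 * μ) * x ^ 2)) :=
      integrable_exp_neg_mul_sq h6
    have hi3 : Integrable (fun x : ℝ => Real.exp (-(3 * μ / 2) * x ^ 2)) :=
      integrable_exp_neg_mul_sq h32
    have hG : Real.Gamma (3 / 2) = Real.sqrt Real.pi / 2 := by
      rw [show (3/2:ℝ) = 1/2 + 1 by norm_num, Real.Gamma_add_one (by norm_num),
        Real.Gamma_one_half_eq]
      ring
    have I1 : ∫ x in Ioi (0:ℝ), x ^ 2 * Real.exp (-(3 * μ / 2) * x ^ 2)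
        = (3 * μ / 2) ^ (-(3:ℝ)/2) * (1 / 2) * Real.Gamma (3 / 2) := by
      have h := integral_rpow_mul_exp_neg_mul_rpow (p := 2) (q := 2)
        (by norm_num) (by norm_num) h32
      rw [show (-(2+1)/2 : ℝ) = -(3:ℝ)/2 by norm_num, show ((2+1)/2 : ℝ) = 3/2 by norm_num] at h
      rw [← h]
      refine setIntegral_congr_fun measurableSet_Ioi fun x hx => ?_
      rw [hnp x]
    rw [MeasureTheory.integral_indicator measurableSet_Ioi]
    have hsplit : ∫ z in Ioi (0:ℝ), c *
          (9 * z ^ 2 / 2 + (Real.exp (-9 * μ * z ^ 2 / 2) - 1) / μ)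
            * Real.exp (-3 * μ * z ^ 2 / 2)
        = ∫ z in Ioi (0:ℝ), ((9 * c / 2) * (z ^ 2 * Real.exp (-(3 * μ / 2) * z ^ 2)) +
            ((c / μ) * Real.exp (-(6 * μ) * z ^ 2)
              - (c / μ) * Real.exp (-(3 * μ / 2) * z ^ 2))) := by
      refine setIntegral_congr_fun measurableSet_Ioi fun z _ => ?_
      have e1 : -(3 * μ / 2) * z ^ 2 = -3 * μ * z ^ 2 / 2 := by ring
      have e2 : -(6 * μ) * z ^ 2 = -9 * μ * z ^ 2 / 2 + -3 * μ * z ^ 2 / 2 := by ring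
      rw [e1, e2, Real.exp_add]
      field_simp
    rw [hsplit, MeasureTheory.integral_add (f := fun z : ℝ =>
          (9 * c / 2) * (z ^ 2 * Real.exp (-(3 * μ / 2) * z ^ 2)))
        (g := fun z : ℝ => (c / μ) * Real.exp (-(6 * μ) * z ^ 2)
          - (c / μ) * Real.exp (-(3 * μ / 2) * z ^ 2))
        ((hi1.integrableOn).const_mul _)
        (((hi2.integrableOn).const_mul _).sub ((hi3.integrableOn).const_mul _)),
      MeasureTheory.integral_sub ((hi2.integrableOn).const_mul _)
        ((hi3.integrableOn).const_mul _),
      MeasureTheory.integral_const_mul, MeasureTheory.integral_const_mul,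
      MeasureTheory.integral_const_mul, I1, integral_gaussian_Ioi, integral_gaussian_Ioi, hG]
    -- now pure algebra with square roots
    set sμ := Real.sqrt μ with hsμ
    set sπ := Real.sqrt Real.pi with hsπ
    set s6 := Real.sqrt 6 with hs6
    have hsμ2 : sμ ^ 2 = μ := Real.sq_sqrt hμ.le
    have hsπ2 : sπ ^ 2 = Real.pi := Real.sq_sqrt Real.pi_pos.le
    have hs62 : s6 ^ 2 = 6 := Real.sq_sqrt (by norm_num)
    have hsμ0 : 0 < sμ := Real.sqrt_pos.mpr hμ
    have hsπ0 : 0 < sπ := Real.sqrt_pos.mpr Real.pi_pos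
    have hs60 : 0 < s6 := Real.sqrt_pos.mpr (by norm_num)
    have h4 : Real.sqrt 4 = 2 := by
      rw [show (4:ℝ) = 2 ^ 2 by norm_num, Real.sqrt_sq (by norm_num)]
    have e6π : Real.sqrt (6 / Real.pi) = s6 / sπ := Real.sqrt_div (by norm_num) _
    have e6μ : Real.sqrt (6 * μ) = s6 * sμ := Real.sqrt_mul (by norm_num) _
    have eπ6μ : Real.sqrt (Real.pi / (6 * μ)) = sπ / (s6 * sμ) := by
      rw [Real.sqrt_div Real.pi_pos.le, e6μ]
    have eπ32 : Real.sqrt (Real.pi / (3 * μ / 2)) = sπ / (s6 * sμ / 2) := by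
      rw [show 3 * μ / 2 = 6 * μ / 4 by ring, Real.sqrt_div Real.pi_pos.le,
        Real.sqrt_div (by positivity), e6μ, h4]
    have e32 : Real.sqrt (3 * μ / 2) = s6 * sμ / 2 := by
      rw [show 3 * μ / 2 = 6 * μ / 4 by ring, Real.sqrt_div (by positivity), e6μ, h4]
    have eμ32 : μ ^ ((3:ℝ)/2) = μ * sμ := by
      rw [show (3:ℝ)/2 = 1 + 1/2 by norm_num, Real.rpow_add hμ, Real.rpow_one,
        ← Real.sqrt_eq_rpow]
    have e32n : (3 * μ / 2) ^ (-(3:ℝ)/2) = ((3 * μ / 2) * (s6 * sμ / 2))⁻¹ := by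
      rw [show -(3:ℝ)/2 = -(1 + 1/2) by norm_num, Real.rpow_neg h32.le,
        Real.rpow_add h32, Real.rpow_one, ← Real.sqrt_eq_rpow, e32]
    rw [hc, e6π, eμ32, e32n, eπ6μ, eπ32]
    rw [← hsμ2]
    field_simp
    ring
end

section
/- For $\mu > 0$ and $t \ge 0$, $\int_0^t \mu^{3/2}\sqrt{6/\pi}\,\big(\frac{9z^2}{2} + \frac{e^{-9\mu z^2/2}-1}{\mu}\big) e^{-3\mu z^2/2}\,dz = \Phi(t\sqrt{3\mu}) + \Phi(t\sqrt{12\mu}) - 1 - 3t\sqrt{\frac{3\mu}{2\pi}} e^{-3\mu t^2/2}$, where $\Phi$ is the standard normal CDF. -/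
/-!
The right-hand side is an antiderivative of the integrand that vanishes at `0`.
Since `Φ' = φ`, the standard Gaussian density, `z ↦ Φ(c z)` has derivative
`c e^{-c² z² / 2} / √(2π)`; with `c² = 3μ` and `c² = 12μ`, and
`e^{-6μz²} = e^{-9μz²/2} e^{-3μz²/2}`, differentiating the right-hand side gives the integrand.
At `t = 0` it equals `2 Φ(0) - 1 = 0` because `φ` is even.
-/

/-- The standard normal cumulative distribution function. -/
noncomputable def Phi (t : ℝ) : ℝ :=
  ∫ s in Set.Iic t, (1 / Real.sqrt (2 * Real.pi)) * Real.exp (-s ^ 2 / 2)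

open Real MeasureTheory ProbabilityTheory Set

theorem hasDerivAt_integral_Iic {f : ℝ → ℝ} (hf : Integrable f) (hcont : Continuous f) (x : ℝ) :
    HasDerivAt (fun t => ∫ s in Iic t, f s) (f x) x := by
  have hsplit : (fun t => ∫ s in Iic t, f s) = fun t => (∫ s in Iic 0, f s) + ∫ s in 0..t, f s := by
    ext t
    rw [← intervalIntegral.integral_Iic_sub_Iic hf.integrableOn hf.integrableOn]
    ring
  rw [hsplit]
  exact (intervalIntegral.integral_hasDerivAt_right hf.intervalIntegrable
    (hcont.stronglyMeasurableAtFilter _ _) hcont.continuousAt).const_add _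

theorem setIntegral_Iic_zero_of_even {f : ℝ → ℝ} (hf : Integrable f) (heven : ∀ x, f (-x) = f x) :
    ∫ x in Iic 0, f x = (∫ x, f x) / 2 := by
  have hsymm : ∫ x in Iic 0, f x = ∫ x in Ioi 0, f x := by
    simpa [heven] using (integral_comp_neg_Ioi (0 : ℝ) f).symm
  have htotal : (∫ x in Iic 0, f x) + ∫ x in Ioi 0, f x = ∫ x, f x := by
    rw [← setIntegral_union (Iic_disjoint_Ioi le_rfl) measurableSet_Ioi hf.integrableOn
      hf.integrableOn, Iic_union_Ioi, Measure.restrict_univ]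
  linarith

theorem gaussianPDFReal_zero_one (x : ℝ) :
    gaussianPDFReal 0 1 x = (√(2 * π))⁻¹ * exp (-x ^ 2 / 2) := by
  simp [gaussianPDFReal]

theorem Phi_eq_integral_gaussianPDFReal (t : ℝ) : Phi t = ∫ s in Iic t, gaussianPDFReal 0 1 s := by
  simp only [Phi, gaussianPDFReal_zero_one, one_div]

theorem hasDerivAt_Phi (x : ℝ) : HasDerivAt Phi (gaussianPDFReal 0 1 x) x := by
  rw [show Phi = _ from funext Phi_eq_integral_gaussianPDFReal]
  exact hasDerivAt_integral_Iic (integrable_gaussianPDFReal 0 1)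
    (by rw [gaussianPDFReal_def]; fun_prop) x

theorem Phi_zero : Phi 0 = 1 / 2 := by
  rw [Phi_eq_integral_gaussianPDFReal, setIntegral_Iic_zero_of_even (integrable_gaussianPDFReal 0 1)
    (fun x => by simp [gaussianPDFReal_zero_one]), integral_gaussianPDFReal_eq_one 0 one_ne_zero]

theorem hasDerivAt_Phi_comp_mul (c z : ℝ) :
    HasDerivAt (fun z => Phi (z * c)) (c * (√(2 * π))⁻¹ * exp (-c ^ 2 * z ^ 2 / 2)) z := by
  refine ((hasDerivAt_Phi (z * c)).comp z ((hasDerivAt_id z).mul_const c)).congr_deriv ?_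
  rw [gaussianPDFReal_zero_one]
  ring_nf

theorem hasDerivAt_exp_mul_sq_div_two (b z : ℝ) :
    HasDerivAt (fun z => exp (b * z ^ 2 / 2)) (b * z * exp (b * z ^ 2 / 2)) z := by
  have := (((hasDerivAt_pow 2 z).const_mul b).div_const 2).exp
  exact this.congr_deriv (by push_cast; ring)

theorem hasDerivAt_largest_centered_eigenvalue_cdf {μ : ℝ} (hμ : 0 < μ) (z : ℝ) :
    HasDerivAt
      (fun z => Phi (z * √(3 * μ)) + Phi (z * √(12 * μ)) - 1
        - 3 * z * √(3 * μ / (2 * π)) * exp (-3 * μ * z ^ 2 / 2))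
      (μ ^ ((3 : ℝ) / 2) * √(6 / π) * (9 * z ^ 2 / 2 + (exp (-9 * μ * z ^ 2 / 2) - 1) / μ)
        * exp (-3 * μ * z ^ 2 / 2)) z := by
  set a := √(3 * μ / (2 * π))
  have hc₁ : √(3 * μ) * (√(2 * π))⁻¹ = a := by
    rw [← sqrt_inv, ← sqrt_mul (by positivity)]
    rfl
  have hc₂ : √(12 * μ) * (√(2 * π))⁻¹ = 2 * a := by
    rw [show 12 * μ = 2 ^ 2 * (3 * μ) by ring, sqrt_mul (by positivity), sqrt_sq zero_le_two,
      mul_assoc, hc₁]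
  have hprefactor : μ ^ ((3 : ℝ) / 2) * √(6 / π) = 2 * a * μ := by
    have h2a : 2 * a = √μ * √(6 / π) := by
      rw [← sqrt_mul hμ.le, show μ * (6 / π) = 2 ^ 2 * (3 * μ / (2 * π)) by field_simp; ring,
        sqrt_mul (by positivity), sqrt_sq zero_le_two]
    rw [h2a, show (3 : ℝ) / 2 = 1 + 1 / 2 by norm_num, rpow_add hμ, rpow_one, ← sqrt_eq_rpow]
    ring
  have hsplit : exp (-(√(12 * μ)) ^ 2 * z ^ 2 / 2)
      = exp (-9 * μ * z ^ 2 / 2) * exp (-3 * μ * z ^ 2 / 2) := by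
    rw [sq_sqrt (by positivity), ← exp_add]
    ring_nf
  have hd := (((hasDerivAt_Phi_comp_mul (√(3 * μ)) z).add
    (hasDerivAt_Phi_comp_mul (√(12 * μ)) z)).sub_const 1).sub
    ((((hasDerivAt_id z).const_mul 3).mul_const a).mul (hasDerivAt_exp_mul_sq_div_two (-3 * μ) z))
  refine hd.congr_deriv ?_
  rw [hc₁, hc₂, hsplit, sq_sqrt (by positivity), hprefactor, id]
  field_simp
  ring

theorem largest_centered_eigenvalue_cdf_general (μ t : ℝ) (hμ : 0 < μ) :
    ∫ z in (0 : ℝ)..t, μ ^ ((3 : ℝ) / 2) * Real.sqrt (6 / Real.pi) *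
        (9 * z ^ 2 / 2 + (Real.exp (-9 * μ * z ^ 2 / 2) - 1) / μ)
          * Real.exp (-3 * μ * z ^ 2 / 2)
      = Phi (t * Real.sqrt (3 * μ)) + Phi (t * Real.sqrt (12 * μ)) - 1
        - 3 * t * Real.sqrt (3 * μ / (2 * Real.pi)) * Real.exp (-3 * μ * t ^ 2 / 2) := by
  have hcont : Continuous fun z => μ ^ ((3 : ℝ) / 2) * √(6 / π) *
      (9 * z ^ 2 / 2 + (exp (-9 * μ * z ^ 2 / 2) - 1) / μ) * exp (-3 * μ * z ^ 2 / 2) := by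
    fun_prop
  rw [intervalIntegral.integral_eq_sub_of_hasDerivAt
    (fun z _ => hasDerivAt_largest_centered_eigenvalue_cdf hμ z) (hcont.intervalIntegrable 0 t)]
  norm_num [Phi_zero]

theorem largest_centered_eigenvalue_cdf (μ t : ℝ) (hμ : 0 < μ) (ht : 0 ≤ t) :
    ∫ z in (0 : ℝ)..t, μ ^ ((3 : ℝ) / 2) * Real.sqrt (6 / Real.pi) *
        (9 * z ^ 2 / 2 + (Real.exp (-9 * μ * z ^ 2 / 2) - 1) / μ)
          * Real.exp (-3 * μ * z ^ 2 / 2)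
      = Phi (t * Real.sqrt (3 * μ)) + Phi (t * Real.sqrt (12 * μ)) - 1
        - 3 * t * Real.sqrt (3 * μ / (2 * Real.pi)) * Real.exp (-3 * μ * t ^ 2 / 2) :=
  largest_centered_eigenvalue_cdf_general μ t hμ
end
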